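/- Strict concavity of the q-Lagrangian: let q be a nonzero real number with q < 1. The function L_q(v) := η(v,v)^{q/2} / q is strictly concave on the open future timelike cone C⁺ = {v ∈ ℝ^{n+1} : v 0 > 0 and η(v,v) > 0}; that is, for all distinct v, w ∈ C⁺ and all λ ∈ (0,1), L_q((1−λ)v + λw) > (1−λ)L_q(v) + λL_q(w). -/

import Mathlib

/-!
Write `L_q = g ∘ τ` with `τ v = √η(v,v)` and `g x = x ^ q / q`, which is strictly increasing and
strictly concave on `(0, ∞)` since `g' x = x ^ (q - 1) > 0` and `g'' x = (q - 1) x ^ (q - 2) < 0`.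
The reverse Cauchy–Schwarz inequality `τ v τ w ≤ η(v,w)` makes `τ` concave on `C⁺`, and the
inequality is strict when `τ v = τ w` and `v ≠ w`. Where `τ v ≠ τ w` the strict concavity of `g`
gives the strict inequality, and where `τ v = τ w` that of `τ` along the segment does.
-/

/-- The Minkowski bilinear form on `ℝ^{n+1}`. -/
def minkEta (n : ℕ) (v w : Fin (n + 1) → ℝ) : ℝ :=
  v 0 * w 0 - ∑ i : Fin n, v i.succ * w i.succ

/-- The open future timelike cone in Minkowski space. -/
def futureTimeCone (n : ℕ) : Set (Fin (n + 1) → ℝ) :=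
  {v | 0 < v 0 ∧ 0 < minkEta n v v}

open Real Set Filter Topology
open scoped RealInnerProductSpace

section Minkowski

variable {n : ℕ}

variable (n) in
noncomputable def spatialPart : (Fin (n + 1) → ℝ) →ₗ[ℝ] EuclideanSpace ℝ (Fin n) :=
  (WithLp.linearEquiv 2 ℝ (Fin n → ℝ)).symm.toLinearMap ∘ₗ LinearMap.funLeft ℝ ℝ Fin.succ

@[simp] lemma spatialPart_apply (v : Fin (n + 1) → ℝ) (i : Fin n) : spatialPart n v i = v i.succ :=
  rfl

lemma minkEta_eq_inner (v w : Fin (n + 1) → ℝ) :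
    minkEta n v w = v 0 * w 0 - ⟪spatialPart n v, spatialPart n w⟫ := by
  simp [minkEta, PiLp.inner_apply, mul_comm]

lemma minkEta_self (v : Fin (n + 1) → ℝ) : minkEta n v v = v 0 ^ 2 - ‖spatialPart n v‖ ^ 2 := by
  rw [minkEta_eq_inner, real_inner_self_eq_norm_sq]; ring

lemma norm_spatialPart_lt {v : Fin (n + 1) → ℝ} (hv : v ∈ futureTimeCone n) :
    ‖spatialPart n v‖ < v 0 := by
  have h := hv.2
  rw [minkEta_self] at h
  nlinarith [norm_nonneg (spatialPart n v), hv.1]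

lemma eq_zero_of_spatialPart_eq_zero {v : Fin (n + 1) → ℝ} (h0 : v 0 = 0)
    (hs : spatialPart n v = 0) : v = 0 := by
  funext i
  refine Fin.cases h0 (fun j => ?_) i
  simpa using congrArg (· j) hs

lemma minkEta_smul_add_smul (v w : Fin (n + 1) → ℝ) (s t : ℝ) :
    minkEta n (s • v + t • w) (s • v + t • w) =
      s ^ 2 * minkEta n v v + 2 * s * t * minkEta n v w + t ^ 2 * minkEta n w w := by
  simp only [minkEta_eq_inner, map_add, map_smul, Pi.add_apply, Pi.smul_apply, smul_eq_mul,
    inner_add_left, inner_add_right, real_inner_smul_right, real_inner_comm]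
  ring

lemma minkEta_add_sub (v w : Fin (n + 1) → ℝ) :
    minkEta n (v + w) (w - v) = minkEta n w w - minkEta n v v := by
  simp only [minkEta_eq_inner, map_add, map_sub, Pi.add_apply, Pi.sub_apply,
    inner_add_left, inner_sub_right, real_inner_comm]
  ring

lemma minkEta_sub_sub (v w : Fin (n + 1) → ℝ) :
    minkEta n (w - v) (w - v) = minkEta n v v - 2 * minkEta n v w + minkEta n w w := by
  simp only [minkEta_eq_inner, map_sub, Pi.sub_apply, inner_sub_left, inner_sub_right,
    real_inner_comm]
  ring

/-- Cauchy–Schwarz gives `u₀ |d₀| ≤ ‖u‖ ‖d‖`; with `‖u‖ < u₀` this rules out `‖d‖ ≤ |d₀|`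
unless `d = 0`. -/
lemma minkEta_self_neg_of_minkEta_eq_zero {u d : Fin (n + 1) → ℝ}
    (hu : ‖spatialPart n u‖ < u 0) (hud : minkEta n u d = 0) (hd : d ≠ 0) :
    minkEta n d d < 0 := by
  rw [minkEta_eq_inner, sub_eq_zero] at hud
  rw [minkEta_self]
  by_contra! hspace
  have hcs := abs_real_inner_le_norm (spatialPart n u) (spatialPart n d)
  have hnorm : ‖spatialPart n d‖ ≤ |d 0| := by
    simpa [abs_of_nonneg (norm_nonneg _)] using sq_le_sq.1 (sub_nonneg.1 hspace)
  have hd0 : d 0 = 0 := by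
    rw [← hud, abs_mul, abs_of_pos (norm_nonneg _ |>.trans_lt hu)] at hcs
    have hle : (u 0 - ‖spatialPart n u‖) * |d 0| ≤ 0 := by
      nlinarith [mul_le_mul_of_nonneg_left hnorm (norm_nonneg (spatialPart n u))]
    exact abs_eq_zero.1
      (le_antisymm (nonpos_of_mul_nonpos_right hle (sub_pos.2 hu)) (abs_nonneg _))
  refine hd (eq_zero_of_spatialPart_eq_zero hd0 ?_)
  simpa [hd0] using hnorm

variable (n) in
noncomputable def minkNorm (v : Fin (n + 1) → ℝ) : ℝ := √(minkEta n v v)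

lemma minkNorm_pos {v : Fin (n + 1) → ℝ} (hv : v ∈ futureTimeCone n) : 0 < minkNorm n v :=
  sqrt_pos.2 hv.2

lemma minkNorm_sq {v : Fin (n + 1) → ℝ} (hv : v ∈ futureTimeCone n) :
    minkNorm n v ^ 2 = minkEta n v v :=
  sq_sqrt hv.2.le

/-- Cauchy–Schwarz on the spatial parts, then
`(v₀w₀ - ab)² - (v₀² - a²)(w₀² - b²) = (v₀b - w₀a)²` with `a, b` their norms. -/
lemma minkNorm_mul_le_minkEta {v w : Fin (n + 1) → ℝ} (hv : v ∈ futureTimeCone n)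
    (hw : w ∈ futureTimeCone n) : minkNorm n v * minkNorm n w ≤ minkEta n v w := by
  have hav := norm_spatialPart_lt hv
  have hbw := norm_spatialPart_lt hw
  have ha := norm_nonneg (spatialPart n v)
  have hb := norm_nonneg (spatialPart n w)
  have hcs := real_inner_le_norm (spatialPart n v) (spatialPart n w)
  have hpos : 0 ≤ v 0 * w 0 - ‖spatialPart n v‖ * ‖spatialPart n w‖ := by nlinarith
  rw [minkNorm, minkNorm, ← sqrt_mul hv.2.le, sqrt_le_left (by rw [minkEta_eq_inner]; linarith),
    minkEta_self, minkEta_self, minkEta_eq_inner]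
  calc (v 0 ^ 2 - ‖spatialPart n v‖ ^ 2) * (w 0 ^ 2 - ‖spatialPart n w‖ ^ 2)
      ≤ (v 0 * w 0 - ‖spatialPart n v‖ * ‖spatialPart n w‖) ^ 2 := by
        nlinarith [sq_nonneg (v 0 * ‖spatialPart n w‖ - w 0 * ‖spatialPart n v‖)]
    _ ≤ _ := pow_le_pow_left₀ hpos (by linarith) 2

lemma minkEta_smul_add_smul_eq {v w : Fin (n + 1) → ℝ} (hv : v ∈ futureTimeCone n)
    (hw : w ∈ futureTimeCone n) (s t : ℝ) :
    minkEta n (s • v + t • w) (s • v + t • w) = (s * minkNorm n v + t * minkNorm n w) ^ 2 +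
      2 * s * t * (minkEta n v w - minkNorm n v * minkNorm n w) := by
  rw [minkEta_smul_add_smul, ← minkNorm_sq hv, ← minkNorm_sq hw]
  ring

lemma mul_minkNorm_add_mul_le {v w : Fin (n + 1) → ℝ} (hv : v ∈ futureTimeCone n)
    (hw : w ∈ futureTimeCone n) {s t : ℝ} (hs : 0 ≤ s) (ht : 0 ≤ t) :
    s * minkNorm n v + t * minkNorm n w ≤ minkNorm n (s • v + t • w) := by
  refine le_sqrt_of_sq_le ?_
  rw [minkEta_smul_add_smul_eq hv hw]
  nlinarith [mul_nonneg (mul_nonneg hs ht) (sub_nonneg.2 (minkNorm_mul_le_minkEta hv hw))]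

lemma convex_futureTimeCone : Convex ℝ (futureTimeCone n) := by
  intro v hv w hw s t hs ht hst
  refine ⟨convex_Ioi (0 : ℝ) hv.1 hw.1 hs ht hst, sqrt_pos.1 ?_⟩
  exact (convex_Ioi 0 (minkNorm_pos hv) (minkNorm_pos hw) hs ht hst).trans_le
    (mul_minkNorm_add_mul_le hv hw hs ht)

lemma concaveOn_minkNorm : ConcaveOn ℝ (futureTimeCone n) (minkNorm n) :=
  ⟨convex_futureTimeCone, fun _ hv _ hw _ _ hs ht _ => mul_minkNorm_add_mul_le hv hw hs ht⟩

/-- `v + w` is timelike and `η`-orthogonal to `w - v`, so `w - v` is spacelike. -/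
lemma minkNorm_mul_lt_minkEta_of_minkNorm_eq {v w : Fin (n + 1) → ℝ}
    (hv : v ∈ futureTimeCone n) (hw : w ∈ futureTimeCone n) (hvw : v ≠ w)
    (heq : minkNorm n v = minkNorm n w) : minkNorm n v * minkNorm n w < minkEta n v w := by
  have hηeq : minkEta n v v = minkEta n w w := by rw [← minkNorm_sq hv, ← minkNorm_sq hw, heq]
  have hsum : ‖spatialPart n (v + w)‖ < (v + w) 0 := by
    rw [map_add, Pi.add_apply]
    exact (norm_add_le _ _).trans_lt (add_lt_add (norm_spatialPart_lt hv) (norm_spatialPart_lt hw))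
  have horth : minkEta n (v + w) (w - v) = 0 := by rw [minkEta_add_sub, hηeq, sub_self]
  have hspace := minkEta_self_neg_of_minkEta_eq_zero hsum horth (sub_ne_zero.2 hvw.symm)
  rw [minkEta_sub_sub] at hspace
  rw [← heq, ← sq, minkNorm_sq hv]
  linarith

lemma mul_minkNorm_add_mul_lt_of_minkNorm_eq {v w : Fin (n + 1) → ℝ}
    (hv : v ∈ futureTimeCone n) (hw : w ∈ futureTimeCone n) (hvw : v ≠ w)
    (heq : minkNorm n v = minkNorm n w) {s t : ℝ} (hs : 0 < s) (ht : 0 < t) :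
    s * minkNorm n v + t * minkNorm n w < minkNorm n (s • v + t • w) := by
  refine lt_sqrt_of_sq_lt ?_
  rw [minkEta_smul_add_smul_eq hv hw]
  have hlt := minkNorm_mul_lt_minkEta_of_minkNorm_eq hv hw hvw heq
  nlinarith [mul_pos (mul_pos hs ht) (sub_pos.2 hlt)]

end Minkowski

section Composition

variable {𝕜 E β γ : Type*} [Semiring 𝕜] [PartialOrder 𝕜] [AddCommMonoid E] [SMul 𝕜 E]
  [AddCommMonoid β] [PartialOrder β] [Module 𝕜 β] [AddCommMonoid γ] [PartialOrder γ] [Module 𝕜 γ]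

theorem StrictConcaveOn.comp_concaveOn_of_strict_on_fibers {s : Set E} {t : Set β} {f : E → β}
    {g : β → γ} (hg : StrictConcaveOn 𝕜 t g) (hg' : StrictMonoOn g t) (hf : ConcaveOn 𝕜 s f)
    (hst : MapsTo f s t)
    (hf' : ∀ ⦃x⦄, x ∈ s → ∀ ⦃y⦄, y ∈ s → x ≠ y → f x = f y → ∀ ⦃a b : 𝕜⦄, 0 < a → 0 < b →
      a • f x + b • f y < f (a • x + b • y)) :
    StrictConcaveOn 𝕜 s (g ∘ f) := by
  refine ⟨hf.1, fun x hx y hy hxy a b ha hb hab => ?_⟩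
  have hmem := hst (hf.1 hx hy ha.le hb.le hab)
  have hcomb := hg.1 (hst hx) (hst hy) ha.le hb.le hab
  by_cases hfib : f x = f y
  · have hfx : a • f x + b • f y = f x := by rw [hfib, ← add_smul, hab, one_smul]
    calc a • g (f x) + b • g (f y) = g (a • f x + b • f y) := by
          rw [hfx, hfib, ← add_smul, hab, one_smul]
      _ < g (f (a • x + b • y)) := hg' hcomb hmem (hf' hx hy hxy hfib ha hb)
  · calc a • g (f x) + b • g (f y) < g (a • f x + b • f y) :=
          hg.2 (hst hx) (hst hy) hfib ha hb hab
      _ ≤ g (f (a • x + b • y)) := hg'.monotoneOn hcomb hmem (hf.2 hx hy ha.le hb.le hab)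

end Composition

section RpowDiv

variable {q : ℝ}

lemma hasDerivAt_rpow_div (hq : q ≠ 0) {x : ℝ} (hx : 0 < x) :
    HasDerivAt (fun y : ℝ => y ^ q / q) (x ^ (q - 1)) x := by
  simpa [mul_div_cancel_left₀ _ hq] using
    (hasDerivAt_rpow_const (p := q) (Or.inl hx.ne')).div_const q

lemma deriv_rpow_div_eventuallyEq (hq : q ≠ 0) {x : ℝ} (hx : 0 < x) :
    deriv (fun y : ℝ => y ^ q / q) =ᶠ[𝓝 x] fun y => y ^ (q - 1) := by
  filter_upwards [Ioi_mem_nhds hx] with y hy using (hasDerivAt_rpow_div hq hy).deriv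

lemma continuousOn_rpow_div : ContinuousOn (fun y : ℝ => y ^ q / q) (Ioi 0) :=
  fun x hx => ((continuousAt_rpow_const x q (Or.inl (ne_of_gt hx))).div_const q).continuousWithinAt

lemma strictMonoOn_rpow_div (hq : q ≠ 0) : StrictMonoOn (fun y : ℝ => y ^ q / q) (Ioi 0) := by
  refine strictMonoOn_of_deriv_pos (convex_Ioi 0) continuousOn_rpow_div fun x hx => ?_
  rw [interior_Ioi] at hx
  rw [(hasDerivAt_rpow_div hq hx).deriv]
  exact rpow_pos_of_pos hx _

lemma strictConcaveOn_rpow_div (hq : q ≠ 0) (hq1 : q < 1) :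
    StrictConcaveOn ℝ (Ioi 0) (fun y : ℝ => y ^ q / q) := by
  refine strictConcaveOn_of_deriv2_neg (convex_Ioi 0) continuousOn_rpow_div fun x hx => ?_
  rw [interior_Ioi] at hx
  rw [Function.iterate_succ_apply, Function.iterate_one,
    (deriv_rpow_div_eventuallyEq hq hx).deriv_eq, Real.deriv_rpow_const]
  exact mul_neg_of_neg_of_pos (by linarith) (rpow_pos_of_pos hx _)

end RpowDiv

theorem lagrangian_strict_concave (n : ℕ) (q : ℝ) (hq0 : q ≠ 0) (hq1 : q < 1) :
    StrictConcaveOn ℝ (futureTimeCone n) (fun v => minkEta n v v ^ (q / 2) / q) := by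
  have hL := (strictConcaveOn_rpow_div hq0 hq1).comp_concaveOn_of_strict_on_fibers
    (strictMonoOn_rpow_div hq0) (concaveOn_minkNorm (n := n)) (fun _ hv => minkNorm_pos hv)
    fun _ hv _ hw hvw heq _ _ ha hb => mul_minkNorm_add_mul_lt_of_minkNorm_eq hv hw hvw heq ha hb
  refine hL.congr fun v hv => ?_
  simp only [Function.comp_apply, minkNorm, rpow_div_two_eq_sqrt q hv.2.le]
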